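/- Let {x_k} be generated by the TRFD algorithm and assume f is bounded below by f_low. If T ≥ 0 satisfies ψ_{p,Δ_*}(x_k) > ε for k = 0,...,T−1, then T ≤ 16 L_{h,p} max{σ, L_J} c_{p,2}(m) c_{2,p}(n)² (f(x_0) − f_low) / (α(1−α)θ²) · ε^{−2} + ⌈|log₂(4 max{σ, L_J} c_{2,p}(n) / (σ(1−α)θ))|⌉ + log₂(4 L_{h,p} max{σ, L_J} c_{p,2}(m) c_{2,p}(n)² Δ_0 / ((1−α)θ) · ε^{−1}) + 1. In particular, the first index T_g(ε) with ψ_{p,Δ_*}(x_{T_g(ε)}) ≤ ε is finite and satisfies this bound. -/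

import Mathlib

/-!
Every iteration of TRFD either halves the finite-difference stepsize `τ` (type I), is successful,
or halves the trust-region radius `Δ` (types II and III). Outside type I we have `η ≥ ε/2`, and by
convexity of `h` the model then predicts a decrease of at least `θ (ε/2) Δ_k`. The actual decrease
differs from the predicted one by at most `K Δ_k²`, `K = L_h c_{p,2} max{σ, L_J} c_{2,p}²` (Taylor
bound for `F`, plus the `√n L_J τ_k / 2` error of the finite-difference Jacobian, and
`τ_k √n ≤ Δ_k`), so every iteration with `Δ_k ≤ (1-α) θ ε / (2K)` is successful and `Δ_k` never
drops below half of that threshold. Hence there are `O(ε⁻²)` successful iterations, and the radius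
halvings exceed them by at most `log₂ (Δ_0 / Δ_min)`. A type I iteration before `T` has `ψ > ε`
but `η < ε/2`, so the Jacobian error, and with it `τ_k`, is bounded below by a multiple of `ε`;
as `τ` only ever halves, there are at most `log₂ (max{σ, L_J} / σ) + 1` such iterations.
-/

open scoped ENNReal

noncomputable section

/-- The `p`-norm on `ℝ^n`, for `p ∈ [1,∞]`. -/
def pNorm (p : ℝ≥0∞) {n : ℕ} (x : Fin n → ℝ) : ℝ :=
  if p = ∞ then ⨆ i, |x i| else (∑ i, |x i| ^ p.toReal) ^ (1 / p.toReal)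

/-- The Euclidean norm on `ℝ^n`. -/
def eucNorm {n : ℕ} (x : Fin n → ℝ) : ℝ := Real.sqrt (∑ i, x i ^ 2)

/-- The operator norm of a matrix, induced by Euclidean norms. -/
def opNorm2 {m n : ℕ} (A : Matrix (Fin m) (Fin n) ℝ) : ℝ :=
  sSup ((fun v => eucNorm (A.mulVec v)) '' {v | eucNorm v ≤ 1})

/-- Forward finite-difference approximation of the Jacobian of `F` at `x` with stepsize `τ`:
the `j`-th column is `(F (x + τ e_j) - F x) / τ`. -/
def fdMatrix {n m : ℕ} (F : (Fin n → ℝ) → (Fin m → ℝ)) (x : Fin n → ℝ) (τ : ℝ) :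
    Matrix (Fin m) (Fin n) ℝ :=
  Matrix.of fun i j => (F (x + Pi.single j τ) i - F x i) / τ

/-- Stationarity measure `ψ_{p,r}(x)`. -/
def psi {n m : ℕ} (Ω : Set (Fin n → ℝ)) (F : (Fin n → ℝ) → (Fin m → ℝ))
    (h : (Fin m → ℝ) → ℝ) (J : (Fin n → ℝ) → Matrix (Fin m) (Fin n) ℝ)
    (p : ℝ≥0∞) (r : ℝ) (x : Fin n → ℝ) : ℝ :=
  r⁻¹ * (h (F x) -
    sInf ((fun s => h (F x + (J x).mulVec s)) '' {s | x + s ∈ Ω ∧ pNorm p s ≤ r}))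

/-- Approximate stationarity measure `η_{p,r}(x; A)`. -/
def eta {n m : ℕ} (Ω : Set (Fin n → ℝ)) (F : (Fin n → ℝ) → (Fin m → ℝ))
    (h : (Fin m → ℝ) → ℝ) (p : ℝ≥0∞) (r : ℝ) (x : Fin n → ℝ)
    (A : Matrix (Fin m) (Fin n) ℝ) : ℝ :=
  r⁻¹ * (h (F x) -
    sInf ((fun s => h (F x + A.mulVec s)) '' {s | x + s ∈ Ω ∧ pNorm p s ≤ r}))

/-- The TRFD algorithm: `x`, `τ`, `Δ`, `A`, `d`, `ρ` are the iterates, finite-difference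
stepsizes, trust-region radii, finite-difference Jacobian approximations, trial steps and
ratios generated by TRFD with parameters `ε, σ, α, θ, Δstar` from the point `x 0`. -/
def TRFDrun {n m : ℕ} (Ω : Set (Fin n → ℝ)) (F : (Fin n → ℝ) → (Fin m → ℝ))
    (h : (Fin m → ℝ) → ℝ) (p : ℝ≥0∞)
    (Lh cpm cnp ε σ α θ Δstar : ℝ)
    (x : ℕ → Fin n → ℝ) (τ Δ : ℕ → ℝ) (A : ℕ → Matrix (Fin m) (Fin n) ℝ)
    (d : ℕ → Fin n → ℝ) (ρ : ℕ → ℝ) : Prop :=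
  x 0 ∈ Ω ∧
  τ 0 = ε / (Lh * σ * cpm * cnp * Real.sqrt n) ∧
  τ 0 * Real.sqrt n ≤ Δ 0 ∧ Δ 0 ≤ Δstar ∧
  (∀ k, A k = fdMatrix F (x k) (τ k)) ∧
  (∀ k,
    -- unsuccessful iteration of type I
    (eta Ω F h p Δstar (x k) (A k) < ε / 2 ∧
      x (k + 1) = x k ∧ Δ (k + 1) = Δ k ∧ τ (k + 1) = τ k / 2) ∨
    (ε / 2 ≤ eta Ω F h p Δstar (x k) (A k) ∧
      -- the trial step is feasible and achieves a `θ`-fraction of the optimal model decrease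
      pNorm p (d k) ≤ Δ k ∧ x k + d k ∈ Ω ∧
      θ * (h (F (x k)) -
          sInf ((fun s => h (F (x k) + (A k).mulVec s)) ''
            {s | x k + s ∈ Ω ∧ pNorm p s ≤ Δ k})) ≤
        h (F (x k)) - h (F (x k) + (A k).mulVec (d k)) ∧
      ρ k = (h (F (x k)) - h (F (x k + d k))) /
            (h (F (x k)) - h (F (x k) + (A k).mulVec (d k))) ∧
      -- successful iteration
      ((α ≤ ρ k ∧ x (k + 1) = x k + d k ∧ Δ (k + 1) = min (2 * Δ k) Δstar ∧
          τ (k + 1) = τ k) ∨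
      -- unsuccessful iteration of type II
       (ρ k < α ∧ τ k * Real.sqrt n ≤ Δ k / 2 ∧
          x (k + 1) = x k ∧ Δ (k + 1) = Δ k / 2 ∧ τ (k + 1) = τ k) ∨
      -- unsuccessful iteration of type III
       (ρ k < α ∧ Δ k / 2 < τ k * Real.sqrt n ∧
          x (k + 1) = x k ∧ Δ (k + 1) = Δ k / 2 ∧ τ (k + 1) = τ k / 2))))


open scoped Matrix Matrix.Norms.L2Operator

section Norms

variable {n m : ℕ}

lemma eucNorm_eq_norm (v : Fin n → ℝ) : eucNorm v = ‖WithLp.toLp 2 v‖ := by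
  simp [eucNorm, EuclideanSpace.norm_eq, sq_abs]

lemma eucNorm_nonneg (v : Fin n → ℝ) : 0 ≤ eucNorm v := Real.sqrt_nonneg _

lemma eucNorm_add_le (v w : Fin n → ℝ) : eucNorm (v + w) ≤ eucNorm v + eucNorm w := by
  simpa only [eucNorm_eq_norm, WithLp.toLp_add] using norm_add_le _ _

lemma eucNorm_smul (a : ℝ) (v : Fin n → ℝ) : eucNorm (a • v) = |a| * eucNorm v := by
  simp only [eucNorm_eq_norm, WithLp.toLp_smul, norm_smul, Real.norm_eq_abs]

lemma opNorm2_eq_norm (A : Matrix (Fin m) (Fin n) ℝ) : opNorm2 A = ‖A‖ := by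
  rw [opNorm2, Matrix.l2_opNorm_def, ← ContinuousLinearMap.sSup_unitClosedBall_eq_norm]
  congr 1
  ext a
  constructor
  · rintro ⟨v, hv, rfl⟩
    exact ⟨WithLp.toLp 2 v, by simpa [eucNorm_eq_norm] using hv, by simp [eucNorm_eq_norm]⟩
  · rintro ⟨w, hw, rfl⟩
    exact ⟨w.ofLp, by simpa [eucNorm_eq_norm] using hw, eucNorm_eq_norm _⟩

lemma opNorm2_nonneg (A : Matrix (Fin m) (Fin n) ℝ) : 0 ≤ opNorm2 A := by
  rw [opNorm2_eq_norm]; positivity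

lemma eucNorm_mulVec_le (A : Matrix (Fin m) (Fin n) ℝ) (v : Fin n → ℝ) :
    eucNorm (A *ᵥ v) ≤ opNorm2 A * eucNorm v := by
  simpa [eucNorm_eq_norm, opNorm2_eq_norm] using A.l2_opNorm_mulVec (WithLp.toLp 2 v)


lemma opNorm2_le_sqrt_mul_of_col_le (A : Matrix (Fin m) (Fin n) ℝ) {c : ℝ} (hc : 0 ≤ c)
    (hcol : ∀ j, eucNorm (fun i => A i j) ≤ c) : opNorm2 A ≤ √n * c := by
  have hfrob : ∀ v, eucNorm (A *ᵥ v) ≤ √(∑ i, ∑ j, A i j ^ 2) * eucNorm v := fun v => by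
    rw [eucNorm, eucNorm, ← Real.sqrt_mul (by positivity), Finset.sum_mul]
    refine Real.sqrt_le_sqrt (Finset.sum_le_sum fun i _ => ?_)
    simpa [Matrix.mulVec, dotProduct] using Finset.sum_mul_sq_le_sq_mul_sq Finset.univ (A i) v
  have hsum : ∑ i, ∑ j, A i j ^ 2 ≤ n * c ^ 2 := by
    rw [Finset.sum_comm]
    calc ∑ j, ∑ i, A i j ^ 2 = ∑ j, eucNorm (fun i => A i j) ^ 2 := by
          simp only [eucNorm, Real.sq_sqrt (Finset.sum_nonneg fun _ _ => sq_nonneg _)]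
      _ ≤ ∑ _j : Fin n, c ^ 2 :=
          Finset.sum_le_sum fun j _ => pow_le_pow_left₀ (eucNorm_nonneg _) (hcol j) 2
      _ = n * c ^ 2 := by simp
  have hfrob_le : √(∑ i, ∑ j, A i j ^ 2) ≤ √n * c := by
    rw [← Real.sqrt_sq hc, ← Real.sqrt_mul n.cast_nonneg]
    exact Real.sqrt_le_sqrt hsum
  refine Real.sSup_le ?_ (by positivity)
  rintro _ ⟨v, hv, rfl⟩
  calc eucNorm (A *ᵥ v) ≤ √n * c * eucNorm v := (hfrob v).trans
        (mul_le_mul_of_nonneg_right hfrob_le (eucNorm_nonneg v))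
    _ ≤ √n * c := mul_le_of_le_one_right (by positivity) hv

variable {p : ℝ≥0∞}

lemma pNorm_zero (hp : 1 ≤ p) : pNorm p (0 : Fin n → ℝ) = 0 := by
  by_cases hp_top : p = ∞
  · simp [pNorm, hp_top]
  · have hq : 0 < p.toReal := ENNReal.toReal_pos (zero_lt_one.trans_le hp).ne' hp_top
    simp [pNorm, hp_top, Real.zero_rpow hq.ne', Real.zero_rpow (inv_pos.2 hq).ne']

lemma pNorm_smul_of_nonneg (hp : 1 ≤ p) {t : ℝ} (ht : 0 ≤ t) (v : Fin n → ℝ) :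
    pNorm p (t • v) = t * pNorm p v := by
  have habs : ∀ i, |(t • v) i| = t * |v i| := fun i => by simp [abs_mul, abs_of_nonneg ht]
  by_cases hp_top : p = ∞
  · simp only [pNorm, hp_top, if_true, habs]
    exact (Real.mul_iSup_of_nonneg ht _).symm
  · have hq : 0 < p.toReal := ENNReal.toReal_pos (zero_lt_one.trans_le hp).ne' hp_top
    simp only [pNorm, hp_top, if_false, habs, Real.mul_rpow ht (abs_nonneg _), ← Finset.mul_sum]
    rw [Real.mul_rpow (by positivity) (by positivity), ← Real.rpow_mul ht,
      mul_one_div_cancel hq.ne', Real.rpow_one]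

lemma abs_sub_le_mul_eucNorm {p : ℝ≥0∞} {h : (Fin m → ℝ) → ℝ} {L c : ℝ} (hL : 0 ≤ L)
    (hh : ∀ z w, |h z - h w| ≤ L * pNorm p (z - w))
    (hc : ∀ z : Fin m → ℝ, pNorm p z ≤ c * eucNorm z) (z w : Fin m → ℝ) :
    |h z - h w| ≤ L * c * eucNorm (z - w) :=
  (hh z w).trans (by rw [mul_assoc]; exact mul_le_mul_of_nonneg_left (hc _) hL)

end Norms

theorem norm_image_add_sub_sub_le_of_lipschitz_fderiv {E G : Type*} [NormedAddCommGroup E]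
    [NormedSpace ℝ E] [NormedAddCommGroup G] [NormedSpace ℝ G] {f : E → G} {f' : E → E →L[ℝ] G}
    {L : ℝ} (hf : ∀ y, HasFDerivAt f (f' y) y) (hf' : ∀ y z, ‖f' y - f' z‖ ≤ L * ‖y - z‖)
    (x u : E) : ‖f (x + u) - f x - f' x u‖ ≤ L / 2 * ‖u‖ ^ 2 := by
  let g : ℝ → G := fun t => f (x + t • u) - f x - t • f' x u
  have hg : ∀ t, HasDerivAt g (f' (x + t • u) u - f' x u) t := fun t => by
    have hline : HasDerivAt (fun t : ℝ => x + t • u) u t := by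
      simpa using ((hasDerivAt_id t).smul_const u).const_add x
    simpa using (((hf _).comp_hasDerivAt t hline).sub_const (f x)).fun_sub
      ((hasDerivAt_id t).smul_const (f' x u))
  have hbound : ∀ t ∈ Set.Ico (0 : ℝ) 1, ‖f' (x + t • u) u - f' x u‖ ≤ L * t * ‖u‖ ^ 2 :=
    fun t ht => calc
      ‖f' (x + t • u) u - f' x u‖ = ‖(f' (x + t • u) - f' x) u‖ := rfl
      _ ≤ ‖f' (x + t • u) - f' x‖ * ‖u‖ := ContinuousLinearMap.le_opNorm _ _
      _ ≤ L * ‖t • u‖ * ‖u‖ := by gcongr; simpa using hf' (x + t • u) x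
      _ = L * t * ‖u‖ ^ 2 := by rw [norm_smul, Real.norm_of_nonneg ht.1]; ring
  have hB : ∀ t, HasDerivAt (fun t : ℝ => L / 2 * t ^ 2 * ‖u‖ ^ 2) (L * t * ‖u‖ ^ 2) t :=
    fun t => (((hasDerivAt_pow 2 t).const_mul (L / 2)).mul_const (‖u‖ ^ 2)).congr_deriv
      (by push_cast; ring)
  have := image_norm_le_of_norm_deriv_right_le_deriv_boundary (f := g) (a := 0) (b := 1)
    (fun t _ => (hg t).continuousAt.continuousWithinAt) (fun t _ => (hg t).hasDerivWithinAt)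
    (by simp [g]) hB hbound (Set.right_mem_Icc.2 zero_le_one)
  simpa [g] using this

section FiniteDifference

variable {n m : ℕ} {F : (Fin n → ℝ) → (Fin m → ℝ)} {J : (Fin n → ℝ) → Matrix (Fin m) (Fin n) ℝ}
  {LJ : ℝ}

lemma eucNorm_sub_sub_mulVec_le
    (hJ : ∀ y, HasFDerivAt F (LinearMap.toContinuousLinearMap (Matrix.mulVecLin (J y))) y)
    (hJLip : ∀ y z, opNorm2 (J y - J z) ≤ LJ * eucNorm (y - z)) (x u : Fin n → ℝ) :
    eucNorm (F (x + u) - F x - J x *ᵥ u) ≤ LJ / 2 * eucNorm u ^ 2 := by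
  let e := PiLp.continuousLinearEquiv 2 ℝ (fun _ : Fin n => ℝ)
  let e' := PiLp.continuousLinearEquiv 2 ℝ (fun _ : Fin m => ℝ)
  let toCLM := Matrix.toEuclideanLin.trans (LinearMap.toContinuousLinearMap (𝕜 := ℝ)
    (E := EuclideanSpace ℝ (Fin n)) (F' := EuclideanSpace ℝ (Fin m)))
  have hf : ∀ y, HasFDerivAt (fun y => e'.symm (F (e y))) (toCLM (J (e y))) y := fun y =>
    (e'.symm.hasFDerivAt.comp y ((hJ (e y)).comp y e.hasFDerivAt) :)
  have hf' : ∀ y z, ‖toCLM (J (e y)) - toCLM (J (e z))‖ ≤ LJ * ‖y - z‖ := fun y z => by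
    rw [← map_sub, ← Matrix.l2_opNorm_def, ← opNorm2_eq_norm]
    simpa [eucNorm_eq_norm, e, PiLp.coe_continuousLinearEquiv] using hJLip (e y) (e z)
  simpa [eucNorm_eq_norm, e, e', toCLM, PiLp.coe_continuousLinearEquiv] using
    norm_image_add_sub_sub_le_of_lipschitz_fderiv hf hf' (WithLp.toLp 2 x) (WithLp.toLp 2 u)

lemma opNorm2_fdMatrix_sub_le {x : Fin n → ℝ} (hLJ : 0 ≤ LJ)
    (htaylor : ∀ u, eucNorm (F (x + u) - F x - J x *ᵥ u) ≤ LJ / 2 * eucNorm u ^ 2)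
    {τ : ℝ} (hτ : 0 < τ) : opNorm2 (fdMatrix F x τ - J x) ≤ √n * (LJ / 2 * τ) := by
  refine opNorm2_le_sqrt_mul_of_col_le _ (by positivity) fun j => ?_
  have hcol : (fun i => (fdMatrix F x τ - J x) i j)
      = τ⁻¹ • (F (x + Pi.single j τ) - F x - J x *ᵥ Pi.single j τ) := by
    ext i
    simp only [fdMatrix, Matrix.sub_apply, Matrix.of_apply, Matrix.mulVec_single, Pi.smul_apply,
      Pi.sub_apply, smul_eq_mul, MulOpposite.smul_eq_mul_unop, MulOpposite.unop_op,
      Matrix.col_apply]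
    field_simp
  have hstep : eucNorm (Pi.single j τ : Fin n → ℝ) = τ := by
    simp [eucNorm_eq_norm, hτ.le]
  rw [hcol, eucNorm_smul, abs_of_pos (inv_pos.2 hτ)]
  calc τ⁻¹ * eucNorm (F (x + Pi.single j τ) - F x - J x *ᵥ Pi.single j τ)
      ≤ τ⁻¹ * (LJ / 2 * τ ^ 2) := by gcongr; simpa [hstep] using htaylor (Pi.single j τ)
    _ = LJ / 2 * τ := by field_simp

end FiniteDifference

section Model

variable {n m : ℕ} {Ω : Set (Fin n → ℝ)} {h : (Fin m → ℝ) → ℝ} {p : ℝ≥0∞} {L c r : ℝ}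
  {x s : Fin n → ℝ} {z : Fin m → ℝ}

def feasibleSteps (Ω : Set (Fin n → ℝ)) (p : ℝ≥0∞) (x : Fin n → ℝ) (r : ℝ) :
    Set (Fin n → ℝ) :=
  {s | x + s ∈ Ω ∧ pNorm p s ≤ r}

/-- `psi Ω F h J p r x` and `eta Ω F h p r x A` unfold to
`r⁻¹ * (h (F x) - modelMin Ω h p x (F x) B r)` with `B = J x`, resp. `B = A`. -/
def modelMin (Ω : Set (Fin n → ℝ)) (h : (Fin m → ℝ) → ℝ) (p : ℝ≥0∞) (x : Fin n → ℝ)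
    (z : Fin m → ℝ) (B : Matrix (Fin m) (Fin n) ℝ) (r : ℝ) : ℝ :=
  sInf ((fun s => h (z + B *ᵥ s)) '' feasibleSteps Ω p x r)

lemma zero_mem_feasibleSteps (hp : 1 ≤ p) (hx : x ∈ Ω) (hr : 0 ≤ r) :
    0 ∈ feasibleSteps Ω p x r :=
  ⟨by simpa using hx, by rwa [pNorm_zero hp]⟩

section Lipschitz

variable (hL : 0 ≤ L) (hhL : ∀ z w, |h z - h w| ≤ L * eucNorm (z - w)) (hc0 : 0 ≤ c)
  (hc : ∀ v : Fin n → ℝ, eucNorm v ≤ c * pNorm p v)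
include hL hhL hc0 hc

lemma abs_sub_le_of_mem_feasibleSteps (B B' : Matrix (Fin m) (Fin n) ℝ)
    (hs : s ∈ feasibleSteps Ω p x r) :
    |h (z + B *ᵥ s) - h (z + B' *ᵥ s)| ≤ L * (opNorm2 (B - B') * (c * r)) := by
  calc |h (z + B *ᵥ s) - h (z + B' *ᵥ s)| ≤ L * eucNorm ((B - B') *ᵥ s) := by
        simpa [Matrix.sub_mulVec] using hhL (z + B *ᵥ s) (z + B' *ᵥ s)
    _ ≤ L * (opNorm2 (B - B') * (c * pNorm p s)) := by
        gcongr
        exact (eucNorm_mulVec_le _ _).trans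
          (mul_le_mul_of_nonneg_left (hc s) (opNorm2_nonneg _))
    _ ≤ L * (opNorm2 (B - B') * (c * r)) := by
        have := opNorm2_nonneg (B - B')
        gcongr
        exact hs.2

lemma bddBelow_image_feasibleSteps (x : Fin n → ℝ) (z : Fin m → ℝ)
    (B : Matrix (Fin m) (Fin n) ℝ) (r : ℝ) :
    BddBelow ((fun s => h (z + B *ᵥ s)) '' feasibleSteps Ω p x r) := by
  refine ⟨h z - L * (opNorm2 (B - 0) * (c * r)), ?_⟩
  rintro _ ⟨s, hs, rfl⟩
  have := abs_sub_le_of_mem_feasibleSteps hL hhL hc0 hc (z := z) B 0 hs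
  simp only [Matrix.zero_mulVec, add_zero] at this
  linarith [neg_abs_le (h (z + B *ᵥ s) - h z)]

lemma modelMin_le_of_mem {B : Matrix (Fin m) (Fin n) ℝ} (hs : s ∈ feasibleSteps Ω p x r) :
    modelMin Ω h p x z B r ≤ h (z + B *ᵥ s) :=
  csInf_le (bddBelow_image_feasibleSteps hL hhL hc0 hc x z B r) (Set.mem_image_of_mem _ hs)

lemma modelMin_le_modelMin_add (hp : 1 ≤ p) (hx : x ∈ Ω) (hr : 0 ≤ r)
    (B B' : Matrix (Fin m) (Fin n) ℝ) :
    modelMin Ω h p x z B' r ≤ modelMin Ω h p x z B r + L * (opNorm2 (B - B') * (c * r)) := by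
  rw [← sub_le_iff_le_add]
  refine le_csInf ⟨_, Set.mem_image_of_mem _ (zero_mem_feasibleSteps hp hx hr)⟩ ?_
  rintro _ ⟨s, hs, rfl⟩
  have hmin := modelMin_le_of_mem hL hhL hc0 hc (z := z) (B := B') hs
  linarith [le_abs_self (h (z + B' *ᵥ s) - h (z + B *ᵥ s)),
    abs_sub_comm (h (z + B' *ᵥ s)) (h (z + B *ᵥ s)),
    abs_sub_le_of_mem_feasibleSteps hL hhL hc0 hc (z := z) B B' hs]

lemma psi_le_eta_add (hp : 1 ≤ p) (hx : x ∈ Ω) (hr : 0 < r) (F : (Fin n → ℝ) → (Fin m → ℝ))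
    (J : (Fin n → ℝ) → Matrix (Fin m) (Fin n) ℝ) (A : Matrix (Fin m) (Fin n) ℝ) :
    psi Ω F h J p r x ≤ eta Ω F h p r x A + L * (opNorm2 (J x - A) * c) := by
  have := modelMin_le_modelMin_add hL hhL hc0 hc hp hx hr.le (z := F x) (J x) A
  calc r⁻¹ * (h (F x) - modelMin Ω h p x (F x) (J x) r)
      ≤ r⁻¹ * (h (F x) - modelMin Ω h p x (F x) A r + L * (opNorm2 (J x - A) * (c * r))) := by
        gcongr; linarith
    _ = r⁻¹ * (h (F x) - modelMin Ω h p x (F x) A r) + L * (opNorm2 (J x - A) * c) := by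
        field_simp

end Lipschitz

lemma inv_mul_sub_modelMin_le_of_le (hp : 1 ≤ p) (hΩ : Convex ℝ Ω) (hh : ConvexOn ℝ Set.univ h)
    {B : Matrix (Fin m) (Fin n) ℝ} {Δ : ℝ}
    (hbdd : BddBelow ((fun s => h (z + B *ᵥ s)) '' feasibleSteps Ω p x Δ))
    (hx : x ∈ Ω) (hΔ : 0 < Δ) (hΔr : Δ ≤ r) :
    r⁻¹ * (h z - modelMin Ω h p x z B r) ≤ Δ⁻¹ * (h z - modelMin Ω h p x z B Δ) := by
  have hr : 0 < r := hΔ.trans_le hΔr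
  set t := Δ / r with ht
  have ht0 : 0 < t := div_pos hΔ hr
  have ht1 : t ≤ 1 := (div_le_one hr).2 hΔr
  have key : ∀ s ∈ feasibleSteps Ω p x r,
      modelMin Ω h p x z B Δ - (1 - t) * h z ≤ h (z + B *ᵥ s) * t := by
    intro s hs
    have hts : t • s ∈ feasibleSteps Ω p x Δ := by
      refine ⟨?_, ?_⟩
      · convert hΩ hx hs.1 (sub_nonneg.2 ht1) ht0.le (by ring) using 1
        module
      · rw [pNorm_smul_of_nonneg hp ht0.le]
        calc t * pNorm p s ≤ t * r := by gcongr; exact hs.2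
          _ = Δ := by rw [ht]; field_simp
    rw [sub_le_iff_le_add']
    calc modelMin Ω h p x z B Δ ≤ h (z + B *ᵥ (t • s)) :=
          csInf_le hbdd (Set.mem_image_of_mem _ hts)
      _ = h ((1 - t) • z + t • (z + B *ᵥ s)) := by
          rw [Matrix.mulVec_smul]; congr 1; module
      _ ≤ (1 - t) * h z + t * h (z + B *ᵥ s) := by
          simpa using hh.2 (Set.mem_univ z) (Set.mem_univ (z + B *ᵥ s))
            (sub_nonneg.2 ht1) ht0.le (by ring)
      _ = (1 - t) * h z + h (z + B *ᵥ s) * t := by ring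
  have hmin : modelMin Ω h p x z B Δ - (1 - t) * h z ≤ modelMin Ω h p x z B r * t := by
    rw [← div_le_iff₀ ht0]
    refine le_csInf ⟨_, Set.mem_image_of_mem _ (zero_mem_feasibleSteps hp hx hr.le)⟩ ?_
    rintro _ ⟨s, hs, rfl⟩
    exact (div_le_iff₀ ht0).2 (key s hs)
  calc r⁻¹ * (h z - modelMin Ω h p x z B r) = Δ⁻¹ * (t * (h z - modelMin Ω h p x z B r)) := by
        rw [ht]; field_simp
    _ ≤ Δ⁻¹ * (h z - modelMin Ω h p x z B Δ) := by gcongr; linarith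

lemma sub_model_le_of_taylor {F : (Fin n → ℝ) → (Fin m → ℝ)}
    {J B : Matrix (Fin m) (Fin n) ℝ} {L LJ : ℝ} (hL : 0 ≤ L)
    (hhL : ∀ z w, |h z - h w| ≤ L * eucNorm (z - w)) {x d : Fin n → ℝ}
    (htaylor : eucNorm (F (x + d) - F x - J *ᵥ d) ≤ LJ / 2 * eucNorm d ^ 2) :
    h (F (x + d)) - h (F x + B *ᵥ d) ≤
      L * (LJ / 2 * eucNorm d ^ 2 + opNorm2 (J - B) * eucNorm d) := by
  have hsplit : F (x + d) - (F x + B *ᵥ d) = (F (x + d) - F x - J *ᵥ d) + (J - B) *ᵥ d := by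
    rw [Matrix.sub_mulVec]; abel
  calc h (F (x + d)) - h (F x + B *ᵥ d) ≤ L * eucNorm (F (x + d) - (F x + B *ᵥ d)) :=
        (le_abs_self _).trans (hhL _ _)
    _ ≤ L * (LJ / 2 * eucNorm d ^ 2 + opNorm2 (J - B) * eucNorm d) := by
        rw [hsplit]
        exact mul_le_mul_of_nonneg_left ((eucNorm_add_le _ _).trans
          (add_le_add htaylor (eucNorm_mulVec_le _ _))) hL

end Model

section Counting

variable {P Q : ℕ → Prop} [DecidablePred P] [DecidablePred Q]

lemma count_add_count_and_add_count_and_not (T : ℕ) :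
    Nat.count P T + Nat.count (fun k => ¬P k ∧ Q k) T + Nat.count (fun k => ¬P k ∧ ¬Q k) T = T := by
  induction T with
  | zero => simp
  | succ T ih => simp only [Nat.count_succ]; split_ifs <;> first | omega | tauto

lemma count_le_add_one_of_forall_count_le {T : ℕ} {B : ℝ} (hB : 0 ≤ B)
    (h : ∀ k < T, P k → (Nat.count P k : ℝ) ≤ B) : (Nat.count P T : ℝ) ≤ B + 1 := by
  induction T with
  | zero => simp; linarith
  | succ T ih =>
    rw [Nat.count_succ]
    split_ifs with hT
    · push_cast; linarith [h T (lt_add_one T) hT]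
    · simpa using ih fun k hk => h k (hk.trans (lt_add_one T))

lemma mul_two_pow_count_le {u : ℕ → ℝ} (hu : ∀ k, u (k + 1) ≤ u k)
    (hP : ∀ k, P k → u (k + 1) ≤ u k / 2) (k : ℕ) : u k * 2 ^ Nat.count P k ≤ u 0 := by
  induction k with
  | zero => simp
  | succ k ih =>
    rw [Nat.count_succ]
    split_ifs with hk
    · calc u (k + 1) * 2 ^ (Nat.count P k + 1) ≤ u k / 2 * 2 ^ (Nat.count P k + 1) := by
            gcongr; exact hP k hk
        _ = u k * 2 ^ Nat.count P k := by ring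
        _ ≤ u 0 := ih
    · simpa using (mul_le_mul_of_nonneg_right (hu k) (by positivity)).trans ih

lemma mul_two_pow_count_le_mul_two_pow_count {u : ℕ → ℝ}
    (hP : ∀ k, P k → u (k + 1) ≤ 2 * u k) (hQ : ∀ k, Q k → u (k + 1) ≤ u k / 2)
    (hu : ∀ k, ¬P k → ¬Q k → u (k + 1) ≤ u k) (hPQ : ∀ k, P k → ¬Q k) (k : ℕ) :
    u k * 2 ^ Nat.count Q k ≤ u 0 * 2 ^ Nat.count P k := by
  induction k with
  | zero => simp
  | succ k ih =>
    simp only [Nat.count_succ]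
    by_cases hk : P k
    · rw [if_pos hk, if_neg (hPQ k hk), pow_succ]
      calc u (k + 1) * 2 ^ (Nat.count Q k + 0) ≤ 2 * u k * 2 ^ Nat.count Q k := by
            rw [add_zero]; gcongr; exact hP k hk
        _ ≤ u 0 * (2 ^ Nat.count P k * 2) := by linarith
    · by_cases hk' : Q k
      · rw [if_neg hk, if_pos hk', pow_succ]
        calc u (k + 1) * (2 ^ Nat.count Q k * 2) ≤ u k / 2 * (2 ^ Nat.count Q k * 2) := by
              gcongr; exact hQ k hk'
          _ ≤ u 0 * 2 ^ (Nat.count P k + 0) := by rw [add_zero]; linarith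
      · rw [if_neg hk, if_neg hk', add_zero, add_zero]
        exact (mul_le_mul_of_nonneg_right (hu k hk hk') (by positivity)).trans ih

lemma add_mul_count_le {φ : ℕ → ℝ} {δ : ℝ} (hφ : ∀ k, φ (k + 1) ≤ φ k)
    (hP : ∀ k, P k → φ (k + 1) ≤ φ k - δ) (k : ℕ) : φ k + δ * Nat.count P k ≤ φ 0 := by
  induction k with
  | zero => simp
  | succ k ih =>
    rw [Nat.count_succ]
    split_ifs with hk
    · push_cast; linarith [hP k hk]
    · rw [add_zero]; linarith [hφ k]

lemma natCast_le_logb_of_two_pow_le {a : ℕ} {y : ℝ} (h : (2 : ℝ) ^ a ≤ y) :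
    (a : ℝ) ≤ Real.logb 2 y := by
  rwa [Real.le_logb_iff_rpow_le one_lt_two ((by positivity : (0 : ℝ) < 2 ^ a).trans_le h),
    Real.rpow_natCast]

lemma logb_div_add_two_le_ceil_abs_logb {a b c d e : ℝ} (ha : 0 < a) (hb : 0 < b) (hd : 0 < d)
    (he : 0 < e) (hc : d * e ≤ c) :
    Real.logb 2 (a / b) + 2 ≤ ⌈|Real.logb 2 (4 * a * c / (b * d * e))|⌉ := by
  have h4 : Real.logb 2 (4 * (a / b)) = 2 + Real.logb 2 (a / b) := by
    rw [Real.logb_mul (by norm_num) (by positivity), show (4 : ℝ) = 2 ^ 2 by norm_num,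
      Real.logb_pow, Real.logb_self_eq_one one_lt_two]
    norm_num
  have hmono : Real.logb 2 (4 * (a / b)) ≤ Real.logb 2 (4 * a * c / (b * d * e)) := by
    refine Real.logb_le_logb_of_le one_lt_two (by positivity) ?_
    rw [show 4 * a * c / (b * d * e) = 4 * (a / b) * (c / (d * e)) by field_simp]
    exact le_mul_of_one_le_right (by positivity) ((one_le_div (by positivity)).2 hc)
  linarith [le_abs_self (Real.logb 2 (4 * a * c / (b * d * e))),
    Int.le_ceil |Real.logb 2 (4 * a * c / (b * d * e))|]

end Counting

/-- `U₁` marks the iterations of type I and `G` those passing the ratio test, so the successful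
iterations are `¬U₁ ∧ G` and those of types II and III are `¬U₁ ∧ ¬G`. -/
theorem le_of_trustRegion_bookkeeping {T : ℕ} {U₁ G : ℕ → Prop} [DecidablePred U₁]
    [DecidablePred G] {Δ τ φ : ℕ → ℝ} {Δmin τmin φmin δ : ℝ}
    (hΔ₁ : ∀ k, U₁ k → Δ (k + 1) ≤ Δ k) (hΔS : ∀ k, ¬U₁ k → G k → Δ (k + 1) ≤ 2 * Δ k)
    (hΔU : ∀ k, ¬U₁ k → ¬G k → Δ (k + 1) ≤ Δ k / 2) (hΔmin : 0 < Δmin)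
    (hΔlow : ∀ k, Δmin ≤ Δ k)
    (hτ : ∀ k, τ (k + 1) ≤ τ k) (hτ₁ : ∀ k, U₁ k → τ (k + 1) ≤ τ k / 2) (hτmin : 0 < τmin)
    (hτmin0 : τmin ≤ τ 0) (hτlow : ∀ k < T, U₁ k → τmin < τ k)
    (hδ : 0 < δ) (hφ : ∀ k, φ (k + 1) ≤ φ k) (hφS : ∀ k, ¬U₁ k → G k → φ (k + 1) ≤ φ k - δ)
    (hφlow : ∀ k, φmin ≤ φ k) :
    (T : ℝ) ≤ 2 * (φ 0 - φmin) / δ + Real.logb 2 (Δ 0 / Δmin) + Real.logb 2 (τ 0 / τmin) + 1 := by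
  set S : ℕ → Prop := fun k => ¬U₁ k ∧ G k
  set U : ℕ → Prop := fun k => ¬U₁ k ∧ ¬G k
  have hcount : (T : ℝ) = Nat.count U₁ T + Nat.count S T + Nat.count U T := by
    exact_mod_cast (count_add_count_and_add_count_and_not T).symm
  have hS : (Nat.count S T : ℝ) ≤ (φ 0 - φmin) / δ := by
    rw [le_div_iff₀ hδ]
    linarith [add_mul_count_le (P := S) hφ (fun k hk => hφS k hk.1 hk.2) T, hφlow T]
  have hU : (Nat.count U T : ℝ) ≤ Nat.count S T + Real.logb 2 (Δ 0 / Δmin) := by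
    have hΔT := mul_two_pow_count_le_mul_two_pow_count (P := S) (Q := U) (u := Δ)
      (fun k hk => hΔS k hk.1 hk.2) (fun k hk => hΔU k hk.1 hk.2)
      (fun k hS hU => hΔ₁ k (by tauto)) (fun k hS hU => hU.2 hS.2) T
    have h2 : (2 : ℝ) ^ Nat.count U T ≤ Δ 0 / Δmin * 2 ^ Nat.count S T := by
      rw [div_mul_eq_mul_div, le_div_iff₀ hΔmin]
      nlinarith [hΔlow T, (by positivity : (0 : ℝ) < 2 ^ Nat.count U T)]
    have hpos : 0 < Δ 0 / Δmin := div_pos (hΔmin.trans_le (hΔlow 0)) hΔmin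
    have := natCast_le_logb_of_two_pow_le h2
    rw [Real.logb_mul hpos.ne' (by positivity), Real.logb_pow, Real.logb_self_eq_one one_lt_two,
      mul_one] at this
    linarith
  have hU₁ : (Nat.count U₁ T : ℝ) ≤ Real.logb 2 (τ 0 / τmin) + 1 := by
    refine count_le_add_one_of_forall_count_le
      (Real.logb_nonneg one_lt_two ((one_le_div hτmin).2 hτmin0)) fun k hk hU₁k => ?_
    refine natCast_le_logb_of_two_pow_le ?_
    rw [le_div_iff₀ hτmin]
    nlinarith [mul_two_pow_count_le hτ hτ₁ k, hτlow k hk hU₁k,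
      (by positivity : (0 : ℝ) < 2 ^ Nat.count U₁ k)]
  linarith [show (φ 0 - φmin) / δ * 2 = 2 * (φ 0 - φmin) / δ by ring]

namespace TRFDrun

variable {n m : ℕ} {Ω : Set (Fin n → ℝ)} {F : (Fin n → ℝ) → (Fin m → ℝ)}
  {h : (Fin m → ℝ) → ℝ} {p : ℝ≥0∞} {Lh cpm cnp ε σ α θ Δstar : ℝ} {x : ℕ → Fin n → ℝ}
  {τ Δ : ℕ → ℝ} {A : ℕ → Matrix (Fin m) (Fin n) ℝ} {d : ℕ → Fin n → ℝ} {ρ : ℕ → ℝ}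
  (hrun : TRFDrun Ω F h p Lh cpm cnp ε σ α θ Δstar x τ Δ A d ρ) {k : ℕ}
include hrun

lemma succ_of_eta_lt (hk : eta Ω F h p Δstar (x k) (A k) < ε / 2) :
    x (k + 1) = x k ∧ Δ (k + 1) = Δ k ∧ τ (k + 1) = τ k / 2 := by
  rcases hrun.2.2.2.2.2 k with hstep | hstep
  · exact hstep.2
  · exact absurd hk (not_lt.2 hstep.1)

lemma trial_step (hk : ¬eta Ω F h p Δstar (x k) (A k) < ε / 2) :
    pNorm p (d k) ≤ Δ k ∧ x k + d k ∈ Ω ∧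
      θ * (h (F (x k)) - modelMin Ω h p (x k) (F (x k)) (A k) (Δ k)) ≤
        h (F (x k)) - h (F (x k) + A k *ᵥ d k) ∧
      ρ k = (h (F (x k)) - h (F (x k + d k))) / (h (F (x k)) - h (F (x k) + A k *ᵥ d k)) := by
  rcases hrun.2.2.2.2.2 k with hstep | ⟨-, hstep⟩
  · exact absurd hstep.1 hk
  · exact ⟨hstep.1, hstep.2.1, hstep.2.2.1, hstep.2.2.2.1⟩

lemma succ_of_ratio_ge (hk : ¬eta Ω F h p Δstar (x k) (A k) < ε / 2) (hρ : α ≤ ρ k) :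
    x (k + 1) = x k + d k ∧ Δ (k + 1) = min (2 * Δ k) Δstar ∧ τ (k + 1) = τ k := by
  rcases hrun.2.2.2.2.2 k with hstep | ⟨-, -, -, -, -, hstep | hstep | hstep⟩
  · exact absurd hstep.1 hk
  · exact hstep.2
  · exact absurd hρ (not_le.2 hstep.1)
  · exact absurd hρ (not_le.2 hstep.1)

lemma succ_of_ratio_lt (hk : ¬eta Ω F h p Δstar (x k) (A k) < ε / 2) (hρ : ρ k < α) :
    x (k + 1) = x k ∧ Δ (k + 1) = Δ k / 2 := by
  rcases hrun.2.2.2.2.2 k with hstep | ⟨-, -, -, -, -, hstep | hstep | hstep⟩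
  · exact absurd hstep.1 hk
  · exact absurd hρ (not_lt.2 hstep.1)
  · exact ⟨hstep.2.2.1, hstep.2.2.2.1⟩
  · exact ⟨hstep.2.2.1, hstep.2.2.2.1⟩

lemma stepsize_succ_le (hτ : 0 ≤ τ k) : τ (k + 1) ≤ τ k := by
  rcases hrun.2.2.2.2.2 k with ⟨-, -, -, hτ'⟩ |
    ⟨-, -, -, -, -, ⟨-, -, -, hτ'⟩ | ⟨-, -, -, -, hτ'⟩ | ⟨-, -, -, -, hτ'⟩⟩ <;> linarith

lemma invariant (hτ0 : 0 < τ 0) (k : ℕ) :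
    x k ∈ Ω ∧ 0 < τ k ∧ τ k * √n ≤ Δ k ∧ Δ k ≤ Δstar := by
  induction k with
  | zero => exact ⟨hrun.1, hτ0, hrun.2.2.1, hrun.2.2.2.1⟩
  | succ k ih =>
    obtain ⟨hx, hτ, hτΔ, hΔ⟩ := ih
    have hΔ0 : 0 ≤ Δ k := (by positivity : 0 ≤ τ k * √n).trans hτΔ
    rcases hrun.2.2.2.2.2 k with ⟨-, hx', hΔ', hτ'⟩ |
      ⟨-, -, hxd, -, -, ⟨-, hx', hΔ', hτ'⟩ | ⟨-, hτΔ', hx', hΔ', hτ'⟩ | ⟨-, -, hx', hΔ', hτ'⟩⟩ <;>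
      rw [hx', hΔ', hτ']
    · exact ⟨hx, by positivity, by linarith, hΔ⟩
    · exact ⟨hxd, hτ, le_min (by linarith) (hτΔ.trans hΔ), min_le_right _ _⟩
    · exact ⟨hx, hτ, hτΔ', by linarith⟩
    · exact ⟨hx, by positivity, by linarith, by linarith⟩

lemma le_model_decrease (hp : 1 ≤ p) (hΩ : Convex ℝ Ω) (hh : ConvexOn ℝ Set.univ h)
    (hbdd : ∀ y z B r, BddBelow ((fun s => h (z + B *ᵥ s)) '' feasibleSteps Ω p y r))
    (hθ : 0 ≤ θ) (hx : x k ∈ Ω) (hΔ : 0 < Δ k) (hΔs : Δ k ≤ Δstar)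
    (hk : ¬eta Ω F h p Δstar (x k) (A k) < ε / 2) :
    θ * (ε / 2) * Δ k ≤ h (F (x k)) - h (F (x k) + A k *ᵥ d k) := by
  have hdec : Δ k * (ε / 2) ≤ h (F (x k)) - modelMin Ω h p (x k) (F (x k)) (A k) (Δ k) := by
    rw [← le_inv_mul_iff₀ hΔ]
    exact (not_lt.1 hk).trans (inv_mul_sub_modelMin_le_of_le hp hΩ hh (hbdd _ _ _ _) hx hΔ hΔs)
  calc θ * (ε / 2) * Δ k = θ * (Δ k * (ε / 2)) := by ring
    _ ≤ θ * (h (F (x k)) - modelMin Ω h p (x k) (F (x k)) (A k) (Δ k)) := by gcongr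
    _ ≤ _ := (hrun.trial_step hk).2.2.1

lemma opNorm2_jacobian_sub_le {J : (Fin n → ℝ) → Matrix (Fin m) (Fin n) ℝ} {LJ : ℝ}
    (hLJ : 0 ≤ LJ)
    (htaylor : ∀ u, eucNorm (F (x k + u) - F (x k) - J (x k) *ᵥ u) ≤ LJ / 2 * eucNorm u ^ 2)
    (hτ : 0 < τ k) : opNorm2 (J (x k) - A k) ≤ √n * (LJ / 2 * τ k) := by
  rw [opNorm2_eq_norm, norm_sub_rev, ← opNorm2_eq_norm, hrun.2.2.2.2.1 k]
  exact opNorm2_fdMatrix_sub_le hLJ htaylor hτ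

lemma model_error_le {J : (Fin n → ℝ) → Matrix (Fin m) (Fin n) ℝ} {L LJ : ℝ} (hL : 0 ≤ L)
    (hhL : ∀ z w, |h z - h w| ≤ L * eucNorm (z - w)) (hcnp1 : 1 ≤ cnp)
    (hcnp : ∀ v : Fin n → ℝ, eucNorm v ≤ cnp * pNorm p v) (hLJ : 0 ≤ LJ)
    (htaylor : ∀ u, eucNorm (F (x k + u) - F (x k) - J (x k) *ᵥ u) ≤ LJ / 2 * eucNorm u ^ 2)
    (hτ : 0 < τ k) (hτΔ : τ k * √n ≤ Δ k) (hk : ¬eta Ω F h p Δstar (x k) (A k) < ε / 2) :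
    h (F (x k + d k)) - h (F (x k) + A k *ᵥ d k) ≤ L * LJ * cnp ^ 2 * Δ k ^ 2 := by
  have hΔ : 0 ≤ Δ k := (by positivity : 0 ≤ τ k * √n).trans hτΔ
  have hd : eucNorm (d k) ≤ cnp * Δ k :=
    (hcnp _).trans (mul_le_mul_of_nonneg_left (hrun.trial_step hk).1 (by linarith))
  have hA : opNorm2 (J (x k) - A k) ≤ LJ / 2 * Δ k :=
    (hrun.opNorm2_jacobian_sub_le hLJ htaylor hτ).trans (by nlinarith)
  have hA0 := opNorm2_nonneg (J (x k) - A k)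
  calc h (F (x k + d k)) - h (F (x k) + A k *ᵥ d k)
      ≤ L * (LJ / 2 * eucNorm (d k) ^ 2 + opNorm2 (J (x k) - A k) * eucNorm (d k)) :=
        sub_model_le_of_taylor hL hhL (htaylor _)
    _ ≤ L * (LJ / 2 * (cnp * Δ k) ^ 2 + LJ / 2 * Δ k * (cnp * Δ k)) := by
        have := eucNorm_nonneg (d k)
        gcongr
    _ ≤ L * LJ * cnp ^ 2 * Δ k ^ 2 := by
        have : cnp ≤ cnp ^ 2 := by nlinarith
        have hLLJ : 0 ≤ L * LJ * Δ k ^ 2 := by positivity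
        nlinarith [mul_le_mul_of_nonneg_left this hLLJ]

lemma le_ratio_of_radius_le {K : ℝ} (hK : 0 < K) (hα : α < 1) (hθ : 0 < θ) (hε : 0 < ε)
    (hΔ : 0 < Δ k) (hΔK : Δ k ≤ (1 - α) * θ * ε / (2 * K))
    (hk : ¬eta Ω F h p Δstar (x k) (A k) < ε / 2)
    (hpred : θ * (ε / 2) * Δ k ≤ h (F (x k)) - h (F (x k) + A k *ᵥ d k))
    (hgap : h (F (x k + d k)) - h (F (x k) + A k *ᵥ d k) ≤ K * Δ k ^ 2) : α ≤ ρ k := by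
  have hpos : 0 < h (F (x k)) - h (F (x k) + A k *ᵥ d k) := lt_of_lt_of_le (by positivity) hpred
  have hKΔ : K * Δ k ^ 2 ≤ (1 - α) * (θ * (ε / 2) * Δ k) := by
    rw [le_div_iff₀ (by positivity)] at hΔK
    nlinarith
  rw [(hrun.trial_step hk).2.2.2, le_div_iff₀ hpos]
  nlinarith

lemma half_le_radius {Δb : ℝ} (hτ0 : 0 < τ 0) (hΔb : Δb ≤ Δ 0)
    (hsucc : ∀ k, ¬eta Ω F h p Δstar (x k) (A k) < ε / 2 → Δ k ≤ Δb → α ≤ ρ k) (k : ℕ) :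
    Δb / 2 ≤ Δ k := by
  have hΔ : ∀ k, 0 ≤ Δ k ∧ Δ k ≤ Δstar := fun k => by
    obtain ⟨-, hτ, hτΔ, hΔs⟩ := hrun.invariant hτ0 k
    exact ⟨(by positivity : 0 ≤ τ k * √n).trans hτΔ, hΔs⟩
  induction k with
  | zero => linarith [(hΔ 0).1]
  | succ k ih =>
    by_cases hk : eta Ω F h p Δstar (x k) (A k) < ε / 2
    · rw [(hrun.succ_of_eta_lt hk).2.1]; exact ih
    by_cases hρ : α ≤ ρ k
    · rw [(hrun.succ_of_ratio_ge hk hρ).2.1]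
      exact le_min (by linarith [(hΔ k).1]) (ih.trans (hΔ k).2)
    · have hbig : Δb < Δ k := not_le.1 fun hle => hρ (hsucc k hk hle)
      rw [(hrun.succ_of_ratio_lt hk (not_le.1 hρ)).2]
      linarith

lemma objective_succ_le_of_ratio_ge {c : ℝ} (hα : 0 ≤ α) (hθ : 0 < θ) (hε : 0 < ε)
    (hc : 0 < c) (hcΔ : c ≤ Δ k) (hk : ¬eta Ω F h p Δstar (x k) (A k) < ε / 2) (hρ : α ≤ ρ k)
    (hpred : θ * (ε / 2) * Δ k ≤ h (F (x k)) - h (F (x k) + A k *ᵥ d k)) :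
    h (F (x (k + 1))) ≤ h (F (x k)) - α * (θ * (ε / 2) * c) := by
  have hcΔ' : θ * (ε / 2) * c ≤ θ * (ε / 2) * Δ k := by gcongr
  have hpos : 0 < h (F (x k)) - h (F (x k) + A k *ᵥ d k) :=
    (by positivity : 0 < θ * (ε / 2) * c).trans_le (hcΔ'.trans hpred)
  rw [(hrun.succ_of_ratio_ge hk hρ).1]
  rw [(hrun.trial_step hk).2.2.2, le_div_iff₀ hpos] at hρ
  nlinarith

lemma objective_succ_le (hα : 0 ≤ α)
    (hpred : ¬eta Ω F h p Δstar (x k) (A k) < ε / 2 →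
      0 < h (F (x k)) - h (F (x k) + A k *ᵥ d k)) :
    h (F (x (k + 1))) ≤ h (F (x k)) := by
  by_cases hk : eta Ω F h p Δstar (x k) (A k) < ε / 2
  · rw [(hrun.succ_of_eta_lt hk).1]
  by_cases hρ : α ≤ ρ k
  · have hpos := hpred hk
    rw [(hrun.succ_of_ratio_ge hk hρ).1]
    rw [(hrun.trial_step hk).2.2.2, le_div_iff₀ hpos] at hρ
    nlinarith
  · rw [(hrun.succ_of_ratio_lt hk (not_le.1 hρ)).1]

lemma lt_mul_stepsize_of_lt_psi {J : (Fin n → ℝ) → Matrix (Fin m) (Fin n) ℝ} {L LJ : ℝ}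
    (hL : 0 ≤ L) (hhL : ∀ z w, |h z - h w| ≤ L * eucNorm (z - w)) (hcnp0 : 0 ≤ cnp)
    (hcnp : ∀ v : Fin n → ℝ, eucNorm v ≤ cnp * pNorm p v) (hp : 1 ≤ p) (hLJ : 0 ≤ LJ)
    (htaylor : ∀ u, eucNorm (F (x k + u) - F (x k) - J (x k) *ᵥ u) ≤ LJ / 2 * eucNorm u ^ 2)
    (hx : x k ∈ Ω) (hΔs : 0 < Δstar) (hτ : 0 < τ k)
    (hk : eta Ω F h p Δstar (x k) (A k) < ε / 2) (hψ : ε < psi Ω F h J p Δstar (x k)) :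
    ε < L * cnp * √n * LJ * τ k := by
  have h1 := psi_le_eta_add hL hhL hcnp0 hcnp hp hx hΔs F J (A k)
  have h2 : L * (opNorm2 (J (x k) - A k) * cnp) ≤ L * (√n * (LJ / 2 * τ k) * cnp) := by
    gcongr; exact hrun.opNorm2_jacobian_sub_le hLJ htaylor hτ
  nlinarith

lemma radius_pos (hn : 1 ≤ n) (hτ0 : 0 < τ 0) (k : ℕ) : 0 < Δ k := by
  obtain ⟨-, hτ, hτΔ, -⟩ := hrun.invariant hτ0 k
  exact (mul_pos hτ (Real.sqrt_pos.2 (Nat.cast_pos.2 hn))).trans_le hτΔ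

lemma threshold_le_radius_zero (hn : 1 ≤ n) {M : ℝ} (hα0 : 0 < α) (hθ0 : 0 ≤ θ)
    (hθ1 : θ ≤ 1) (hε : 0 < ε) (hLh : 0 < Lh) (hcpm : 0 < cpm) (hcnp1 : 1 ≤ cnp) (hσ : 0 < σ)
    (hσM : σ ≤ M) : (1 - α) * θ * ε / (2 * (Lh * cpm * M * cnp ^ 2)) ≤ Δ 0 := by
  have hsn : 0 < √(n : ℝ) := Real.sqrt_pos.2 (Nat.cast_pos.2 hn)
  have hM : 0 < M := hσ.trans_le hσM
  have hK : Lh * σ * cpm * cnp ≤ 2 * (Lh * cpm * M * cnp ^ 2) := by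
    have : Lh * σ * cpm * cnp ≤ Lh * M * cpm * cnp ^ 2 := by gcongr; nlinarith
    nlinarith [(by positivity : 0 ≤ Lh * cpm * σ * cnp ^ 2)]
  calc (1 - α) * θ * ε / (2 * (Lh * cpm * M * cnp ^ 2)) ≤ 1 * ε / (Lh * σ * cpm * cnp) := by
        gcongr
        nlinarith
    _ = τ 0 * √n := by rw [hrun.2.1]; field_simp
    _ ≤ Δ 0 := hrun.2.2.1

lemma div_lt_stepsize (hn : 1 ≤ n) {LJ M : ℝ} (hLh : 0 < Lh) (hcpm : 0 < cpm) (hcnp : 0 < cnp)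
    (hσ : 0 < σ) (hLJM : LJ ≤ M) (hM : 0 < M) (hτ : 0 < τ k)
    (hε : ε < Lh * cpm * cnp * √n * LJ * τ k) : τ 0 / (M / σ) < τ k := by
  have hsn : 0 < √(n : ℝ) := Real.sqrt_pos.2 (Nat.cast_pos.2 hn)
  have hτ0 : τ 0 / (M / σ) = ε / (Lh * cpm * cnp * √n * M) := by rw [hrun.2.1]; field_simp
  rw [hτ0, div_lt_iff₀ (by positivity)]
  calc ε < Lh * cpm * cnp * √n * LJ * τ k := hε
    _ ≤ Lh * cpm * cnp * √n * M * τ k := by gcongr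
    _ = τ k * (Lh * cpm * cnp * √n * M) := by ring

theorem iterations_le {T : ℕ} {K R flow : ℝ} (hα0 : 0 < α) (hα1 : α < 1)
    (hθ : 0 < θ) (hε : 0 < ε) (hK : 0 < K) (hτ0 : 0 < τ 0) (hΔ : ∀ k, 0 < Δ k)
    (hΔ0 : (1 - α) * θ * ε / (2 * K) ≤ Δ 0)
    (hpred : ∀ k, ¬eta Ω F h p Δstar (x k) (A k) < ε / 2 →
      θ * (ε / 2) * Δ k ≤ h (F (x k)) - h (F (x k) + A k *ᵥ d k))
    (hgap : ∀ k, ¬eta Ω F h p Δstar (x k) (A k) < ε / 2 →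
      h (F (x k + d k)) - h (F (x k) + A k *ᵥ d k) ≤ K * Δ k ^ 2)
    (hR : 1 ≤ R) (hτlow : ∀ k < T, eta Ω F h p Δstar (x k) (A k) < ε / 2 → τ 0 / R < τ k)
    (hflow : ∀ k, flow ≤ h (F (x k))) :
    (T : ℝ) ≤ 16 * K * (h (F (x 0)) - flow) / (α * (1 - α) * θ ^ 2) / ε ^ 2 +
      Real.logb 2 (4 * K * Δ 0 / ((1 - α) * θ) / ε) + Real.logb 2 R + 1 := by
  classical
  set Δb := (1 - α) * θ * ε / (2 * K) with hΔb_def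
  have hα : 0 < 1 - α := sub_pos.2 hα1
  have hΔb : 0 < Δb := by positivity
  have hΔlow := hrun.half_le_radius hτ0 hΔ0 fun k hk hΔk =>
    hrun.le_ratio_of_radius_le hK hα1 hθ hε (hΔ k) hΔk hk (hpred k hk) (hgap k hk)
  have hcount := le_of_trustRegion_bookkeeping
    (U₁ := fun k => eta Ω F h p Δstar (x k) (A k) < ε / 2)
    (G := fun k => α ≤ ρ k) (φ := fun k => h (F (x k)))
    (fun k hk => (hrun.succ_of_eta_lt hk).2.1.le)
    (fun k hk hG => (hrun.succ_of_ratio_ge hk hG).2.1.trans_le (min_le_left _ _))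
    (fun k hk hG => (hrun.succ_of_ratio_lt hk (not_le.1 hG)).2.le) (by positivity) hΔlow
    (fun k => hrun.stepsize_succ_le (hrun.invariant hτ0 k).2.1.le)
    (fun k hk => (hrun.succ_of_eta_lt hk).2.2.le) (by positivity)
    (div_le_self hτ0.le hR) hτlow (by positivity)
    (fun k => hrun.objective_succ_le hα0.le fun hk =>
      (by have := hΔ k; positivity : 0 < θ * (ε / 2) * Δ k).trans_le (hpred k hk))
    (fun k hk hG => hrun.objective_succ_le_of_ratio_ge hα0.le hθ hε (by positivity) (hΔlow k)
      hk hG (hpred k hk)) hflow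
  have e1 : 2 * (h (F (x 0)) - flow) / (α * (θ * (ε / 2) * (Δb / 2)))
      = 16 * K * (h (F (x 0)) - flow) / (α * (1 - α) * θ ^ 2) / ε ^ 2 := by
    rw [hΔb_def]; field_simp; ring
  have e2 : Δ 0 / (Δb / 2) = 4 * K * Δ 0 / ((1 - α) * θ) / ε := by
    rw [hΔb_def]; field_simp; ring
  have e3 : τ 0 / (τ 0 / R) = R := by field_simp
  rwa [e1, e2, e3] at hcount

end TRFDrun

theorem stmt13_general
    {n m : ℕ} (hn : 1 ≤ n) (p : ℝ≥0∞) (hp : 1 ≤ p)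
    (Ω : Set (Fin n → ℝ)) (hΩcv : Convex ℝ Ω)
    (F : (Fin n → ℝ) → (Fin m → ℝ)) (J : (Fin n → ℝ) → Matrix (Fin m) (Fin n) ℝ)
    (hJ : ∀ y, HasFDerivAt F (LinearMap.toContinuousLinearMap (Matrix.mulVecLin (J y))) y)
    (LJ : ℝ) (hLJ : 0 < LJ)
    (hJLip : ∀ y z, opNorm2 (J y - J z) ≤ LJ * eucNorm (y - z))
    (h : (Fin m → ℝ) → ℝ) (hconv : ConvexOn ℝ Set.univ h)
    (Lh : ℝ) (hLh : 0 < Lh)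
    (hhLip : ∀ z w, |h z - h w| ≤ Lh * pNorm p (z - w))
    (cnp cpm : ℝ) (hcnp1 : 1 ≤ cnp) (hcpm1 : 1 ≤ cpm)
    (hcnp : ∀ v : Fin n → ℝ, eucNorm v ≤ cnp * pNorm p v)
    (hcpm : ∀ z : Fin m → ℝ, pNorm p z ≤ cpm * eucNorm z)
    (ε σ α θ Δstar : ℝ) (hε : 0 < ε) (hσ : 0 < σ)
    (hα0 : 0 < α) (hα1 : α < 1) (hθ0 : 0 < θ) (hθ1 : θ ≤ 1)
    (x : ℕ → Fin n → ℝ) (τ Δ : ℕ → ℝ) (A : ℕ → Matrix (Fin m) (Fin n) ℝ)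
    (d : ℕ → Fin n → ℝ) (ρ : ℕ → ℝ)
    (hrun : TRFDrun Ω F h p Lh cpm cnp ε σ α θ Δstar x τ Δ A d ρ)
    (flow : ℝ) (hflow : ∀ y, flow ≤ h (F y))
    (T : ℕ) (hT : ∀ k < T, ε < psi Ω F h J p Δstar (x k)) :
    (T : ℝ) ≤
      16 * Lh * max σ LJ * cpm * cnp ^ 2 * (h (F (x 0)) - flow) /
        (α * (1 - α) * θ ^ 2) / ε ^ 2 +
      (⌈|Real.logb 2 (4 * max σ LJ * cnp / (σ * (1 - α) * θ))|⌉ : ℝ) +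
      Real.logb 2 (4 * Lh * max σ LJ * cpm * cnp ^ 2 * Δ 0 / ((1 - α) * θ) / ε) + 1 := by
  set M := max σ LJ
  have hσM : σ ≤ M := le_max_left _ _
  have hM : 0 < M := hσ.trans_le hσM
  have hτ0 : 0 < τ 0 := by
    rw [hrun.2.1]; have := Real.sqrt_pos.2 (Nat.cast_pos.2 hn); positivity
  have hinv := hrun.invariant hτ0
  have hΔ := hrun.radius_pos hn hτ0
  have hL : 0 ≤ Lh * cpm := by positivity
  have hcnp0 : 0 ≤ cnp := by linarith
  have hhL := abs_sub_le_mul_eucNorm hLh.le hhLip hcpm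
  have htaylor := eucNorm_sub_sub_mulVec_le hJ hJLip
  have hpred := fun k => hrun.le_model_decrease hp hΩcv hconv
    (bddBelow_image_feasibleSteps hL hhL hcnp0 hcnp) hθ0.le (hinv k).1 (hΔ k) (hinv k).2.2.2
  have hgap := fun k hk => (hrun.model_error_le hL hhL hcnp1 hcnp hLJ.le (htaylor (x k))
    (hinv k).2.1 (hinv k).2.2.1 hk).trans
      (by gcongr; exact le_max_right σ LJ : _ ≤ Lh * cpm * M * cnp ^ 2 * Δ k ^ 2)
  have hτlow := fun k hkT hk => hrun.div_lt_stepsize hn hLh (by positivity) (by positivity) hσ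
    (le_max_right σ LJ) hM (hinv k).2.1 (hrun.lt_mul_stepsize_of_lt_psi hL hhL hcnp0 hcnp hp
      hLJ.le (htaylor (x k)) (hinv k).1 ((hΔ 0).trans_le hrun.2.2.2.1) (hinv k).2.1 hk (hT k hkT))
  have hlog := logb_div_add_two_le_ceil_abs_logb hM hσ (sub_pos.2 hα1) hθ0 (c := cnp) (by nlinarith)
  have hbound := hrun.iterations_le hα0 hα1 hθ0 hε (by positivity) hτ0 hΔ
    (hrun.threshold_le_radius_zero hn hα0 hθ0.le hθ1 hε hLh (by positivity) hcnp1 hσ hσM)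
    hpred hgap ((one_le_div hσ).2 hσM) hτlow (fun k => hflow (x k))
  rw [show 16 * (Lh * cpm * M * cnp ^ 2) = 16 * Lh * M * cpm * cnp ^ 2 by ring,
    show 4 * (Lh * cpm * M * cnp ^ 2) = 4 * Lh * M * cpm * cnp ^ 2 by ring] at hbound
  linarith

/-- Theorem 3.8: iteration complexity of TRFD for nonconvex problems. -/
theorem stmt13
    {n m : ℕ} (hn : 1 ≤ n) (hm : 1 ≤ m) (p : ℝ≥0∞) (hp : 1 ≤ p)
    (Ω : Set (Fin n → ℝ)) (hΩne : Ω.Nonempty) (hΩcl : IsClosed Ω) (hΩcv : Convex ℝ Ω)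
    (F : (Fin n → ℝ) → (Fin m → ℝ)) (J : (Fin n → ℝ) → Matrix (Fin m) (Fin n) ℝ)
    (hJ : ∀ y, HasFDerivAt F (LinearMap.toContinuousLinearMap (Matrix.mulVecLin (J y))) y)
    (LJ : ℝ) (hLJ : 0 < LJ)
    (hJLip : ∀ y z, opNorm2 (J y - J z) ≤ LJ * eucNorm (y - z))
    (h : (Fin m → ℝ) → ℝ) (hconv : ConvexOn ℝ Set.univ h)
    (Lh : ℝ) (hLh : 0 < Lh)
    (hhLip : ∀ z w, |h z - h w| ≤ Lh * pNorm p (z - w))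
    (cnp cpm : ℝ) (hcnp1 : 1 ≤ cnp) (hcpm1 : 1 ≤ cpm)
    (hcnp : ∀ v : Fin n → ℝ, eucNorm v ≤ cnp * pNorm p v)
    (hcpm : ∀ z : Fin m → ℝ, pNorm p z ≤ cpm * eucNorm z)
    (ε σ α θ Δstar : ℝ) (hε : 0 < ε) (hσ : 0 < σ)
    (hα0 : 0 < α) (hα1 : α < 1) (hθ0 : 0 < θ) (hθ1 : θ ≤ 1)
    (x : ℕ → Fin n → ℝ) (τ Δ : ℕ → ℝ) (A : ℕ → Matrix (Fin m) (Fin n) ℝ)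
    (d : ℕ → Fin n → ℝ) (ρ : ℕ → ℝ)
    (hrun : TRFDrun Ω F h p Lh cpm cnp ε σ α θ Δstar x τ Δ A d ρ)
    (flow : ℝ) (hflow : ∀ y, flow ≤ h (F y))
    (T : ℕ) (hT : ∀ k < T, ε < psi Ω F h J p Δstar (x k)) :
    (T : ℝ) ≤
      16 * Lh * max σ LJ * cpm * cnp ^ 2 * (h (F (x 0)) - flow) /
        (α * (1 - α) * θ ^ 2) / ε ^ 2 +
      (⌈|Real.logb 2 (4 * max σ LJ * cnp / (σ * (1 - α) * θ))|⌉ : ℝ) +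
      Real.logb 2 (4 * Lh * max σ LJ * cpm * cnp ^ 2 * Δ 0 / ((1 - α) * θ) / ε) + 1 :=
  stmt13_general hn p hp Ω hΩcv F J hJ LJ hLJ hJLip h hconv Lh hLh hhLip cnp cpm hcnp1 hcpm1 hcnp
    hcpm ε σ α θ Δstar hε hσ hα0 hα1 hθ0 hθ1 x τ Δ A d ρ hrun flow hflow T hT
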